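/- Consider the Cucker–Smale system v̇ᵢ = (λ/N) Σⱼ ψ(|xᵢ−xⱼ|)(vⱼ − vᵢ) with λ > 0 and communication rate ψ bounded below by ψ_min > 0. Then the velocity diameter D(t) = max_{i,j} |vᵢ(t) − vⱼ(t)| satisfies D(t) ≤ D(0) e^{−λ ψ_min t}, i.e., unconditional flocking occurs. -/

import Mathlib

/-!
The squared velocity diameter `f t = max_{i,j} ‖v t i - v t j‖²` is a maximum of finitely many
differentiable functions, so its right Dini derivative is bounded by the derivatives of the pairs
attaining the maximum. For such an extremal pair `(i, j)` every velocity `v t l` lies in the slab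
between `v t i` and `v t j`, so each communication weight `ψ (‖x t k - x t l‖)` may be replaced by
its lower bound `ψ_min`; this gives `f' ≤ -2 λ ψ_min f`, and Grönwall's inequality concludes.
-/

open Filter Topology Real Set
open scoped RealInnerProductSpace

theorem eventually_slope_ciSup_lt {ι : Type*} [Finite ι] [Nonempty ι] {g : ι → ℝ → ℝ}
    {g' : ι → ℝ} {x C r : ℝ} (hg : ∀ i, HasDerivAt (g i) (g' i) x)
    (hC : ∀ i, g i x = ⨆ j, g j x → g' i ≤ C) (hr : C < r) :
    ∀ᶠ z in 𝓝[>] x, slope (fun z ↦ ⨆ j, g j z) x z < r := by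
  obtain ⟨a, ha⟩ := exists_eq_ciSup_of_finite (f := fun j ↦ g j x)
  -- Near `x`, an index inactive at `x` stays below the active index `a`.
  have hloc : ∀ i, ∀ᶠ z in 𝓝[>] x, g i z < g a z ∨ slope (g i) x z < r := by
    intro i
    rcases (le_ciSup (Finite.bddAbove_range fun j ↦ g j x) i).lt_or_eq with hlt | heq
    · rw [← ha] at hlt
      exact nhdsWithin_le_nhds <| ((hg i).continuousAt.eventually_lt (hg a).continuousAt hlt).mono
        fun z hz ↦ .inl hz
    · exact ((hg i).hasDerivWithinAt.limsup_slope_le' (lt_irrefl x) ((hC i heq).trans_lt hr)).mono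
        fun z hz ↦ .inr hz
  filter_upwards [eventually_all.2 hloc, self_mem_nhdsWithin] with z hz hxz
  obtain ⟨i, hi⟩ := exists_eq_ciSup_of_finite (f := fun j ↦ g j z)
  have hai : g a z ≤ g i z := hi ▸ le_ciSup (Finite.bddAbove_range fun j ↦ g j z) a
  have hix : g i x ≤ ⨆ j, g j x := le_ciSup (Finite.bddAbove_range fun j ↦ g j x) i
  have hpos : 0 < (z - x)⁻¹ := inv_pos.2 (sub_pos.2 hxz)
  rcases hz i with hlt | hslope
  · exact absurd hai hlt.not_ge
  · calc slope (fun z ↦ ⨆ j, g j z) x z = (z - x)⁻¹ * (g i z - ⨆ j, g j x) := by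
          rw [slope_def_field, ← hi, div_eq_inv_mul]
      _ ≤ (z - x)⁻¹ * (g i z - g i x) := by gcongr
      _ = slope (g i) x z := by rw [slope_def_field, div_eq_inv_mul]
      _ < r := hslope

theorem ciSup_le_mul_exp_of_hasDerivAt {ι : Type*} [Finite ι] [Nonempty ι] {g g' : ι → ℝ → ℝ}
    {K a b : ℝ} (hg : ∀ i, ∀ s ∈ Icc a b, HasDerivAt (g i) (g' i s) s)
    (hK : ∀ i, ∀ s ∈ Ico a b, g i s = ⨆ j, g j s → g' i s ≤ K * g i s) :
    ∀ t ∈ Icc a b, ⨆ i, g i t ≤ (⨆ i, g i a) * exp (K * (t - a)) := by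
  have := Fintype.ofFinite ι
  have hcont : ContinuousOn (fun s ↦ ⨆ i, g i s) (Icc a b) := by
    simp only [← Finset.sup'_univ_eq_ciSup]
    exact ContinuousOn.finset_sup'_apply Finset.univ_nonempty fun i _ s hs ↦
      (hg i s hs).continuousAt.continuousWithinAt
  intro t ht
  simpa only [gronwallBound_ε0] using le_gronwallBound_of_liminf_deriv_right_le (ε := 0)
    (f' := fun s ↦ K * ⨆ i, g i s) hcont
    (fun s hs r hr ↦ (eventually_slope_ciSup_lt (fun i ↦ hg i s (Ico_subset_Icc_self hs))
      (fun i hi ↦ (hK i s hs hi).trans_eq (by rw [hi])) hr).frequently)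
    le_rfl (fun s _ ↦ by rw [add_zero]) t ht

section InnerProductSpace

variable {E : Type*} [NormedAddCommGroup E] [InnerProductSpace ℝ E]

theorem inner_sub_sub_nonpos_of_norm_sub_le {a b c : E} (h : ‖c - b‖ ≤ ‖a - b‖) :
    ⟪a - b, c - a⟫ ≤ 0 := by
  calc ⟪a - b, c - a⟫ = ⟪a - b, c - b⟫ - ‖a - b‖ ^ 2 := by
        rw [← real_inner_self_eq_norm_sq, ← inner_sub_right, sub_sub_sub_cancel_right]
    _ ≤ ‖a - b‖ * ‖c - b‖ - ‖a - b‖ ^ 2 := by gcongr; exact real_inner_le_norm _ _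
    _ ≤ 0 := by nlinarith [norm_nonneg (a - b)]

theorem inner_sub_sum_smul_sub_le {ι : Type*} [Fintype ι] {w : ι → ι → ℝ} {m : ℝ}
    (hw : ∀ k l, m ≤ w k l) {v : ι → E} {i j : ι} (hmax : ∀ k l, ‖v k - v l‖ ≤ ‖v i - v j‖) :
    ⟪v i - v j, ∑ l, w i l • (v l - v i) - ∑ l, w j l • (v l - v j)⟫
      ≤ -(m * Fintype.card ι) * ‖v i - v j‖ ^ 2 := by
  have hi (l : ι) : ⟪v i - v j, v l - v i⟫ ≤ 0 := inner_sub_sub_nonpos_of_norm_sub_le (hmax l j)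
  have hj (l : ι) : 0 ≤ ⟪v i - v j, v l - v j⟫ := by
    have := inner_sub_sub_nonpos_of_norm_sub_le (a := v j) (c := v l)
      ((hmax l i).trans_eq (norm_sub_rev _ _))
    rwa [← neg_sub, inner_neg_left, neg_nonpos] at this
  calc ⟪v i - v j, ∑ l, w i l • (v l - v i) - ∑ l, w j l • (v l - v j)⟫
      = ∑ l, w i l * ⟪v i - v j, v l - v i⟫ - ∑ l, w j l * ⟪v i - v j, v l - v j⟫ := by
        simp only [inner_sub_right, inner_sum, real_inner_smul_right]
    _ ≤ ∑ l, m * ⟪v i - v j, v l - v i⟫ - ∑ l, m * ⟪v i - v j, v l - v j⟫ := by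
        refine sub_le_sub (Finset.sum_le_sum fun l _ ↦ ?_) (Finset.sum_le_sum fun l _ ↦ ?_)
        · exact mul_le_mul_of_nonpos_right (hw i l) (hi l)
        · exact mul_le_mul_of_nonneg_right (hw j l) (hj l)
    _ = ∑ _l : ι, m * ⟪v i - v j, -(v i - v j)⟫ := by
        rw [← Finset.sum_sub_distrib]
        congr! 1 with l
        rw [← mul_sub, ← inner_sub_right, sub_sub_sub_cancel_left, neg_sub]
    _ = -(m * Fintype.card ι) * ‖v i - v j‖ ^ 2 := by
        simp only [inner_neg_right, real_inner_self_eq_norm_sq, Finset.sum_const,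
          Finset.card_univ, nsmul_eq_mul]
        ring

theorem inner_sub_cuckerSmale_sub_le {N : ℕ} {lam m : ℝ} (hlam : 0 ≤ lam) {ψ : ℝ → ℝ}
    (hψ : ∀ r, 0 ≤ r → m ≤ ψ r) (x v : Fin N → E) {i j : Fin N}
    (hmax : ∀ k l, ‖v k - v l‖ ≤ ‖v i - v j‖) :
    ⟪v i - v j, (lam / N) • ∑ l, ψ ‖x i - x l‖ • (v l - v i)
      - (lam / N) • ∑ l, ψ ‖x j - x l‖ • (v l - v j)⟫ ≤ -(lam * m) * ‖v i - v j‖ ^ 2 := by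
  have hN : (N : ℝ) ≠ 0 := Nat.cast_ne_zero.2 (Fin.pos i).ne'
  have hdiss := inner_sub_sum_smul_sub_le (w := fun k l ↦ ψ ‖x k - x l‖)
    (fun k l ↦ hψ _ (norm_nonneg _)) hmax
  rw [Fintype.card_fin] at hdiss
  calc _ = lam / N * ⟪v i - v j, ∑ l, ψ ‖x i - x l‖ • (v l - v i)
        - ∑ l, ψ ‖x j - x l‖ • (v l - v j)⟫ := by rw [← smul_sub, real_inner_smul_right]
    _ ≤ lam / N * (-(m * N) * ‖v i - v j‖ ^ 2) := by gcongr
    _ = -(lam * m) * ‖v i - v j‖ ^ 2 := by field_simp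

theorem cuckerSmale_norm_sub_sq_le {N : ℕ} {lam ψmin : ℝ} (hlam : 0 ≤ lam) {ψ : ℝ → ℝ}
    (hψ : ∀ r, 0 ≤ r → ψmin ≤ ψ r) {x v : ℝ → Fin N → E}
    (hv : ∀ i t, HasDerivAt (fun s ↦ v s i)
      ((lam / N) • ∑ j : Fin N, ψ ‖x t i - x t j‖ • (v t j - v t i)) t)
    {t : ℝ} (ht : 0 ≤ t) (i j : Fin N) :
    ‖v t i - v t j‖ ^ 2
      ≤ (⨆ p : Fin N × Fin N, ‖v 0 p.1 - v 0 p.2‖ ^ 2) * exp (-(2 * (lam * ψmin)) * t) := by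
  have : Nonempty (Fin N) := ⟨i⟩
  have hderiv (p : Fin N × Fin N) (s : ℝ) :
      HasDerivAt (fun s ↦ ‖v s p.1 - v s p.2‖ ^ 2) (2 * ⟪v s p.1 - v s p.2,
        (lam / N) • ∑ l, ψ ‖x s p.1 - x s l‖ • (v s l - v s p.1)
          - (lam / N) • ∑ l, ψ ‖x s p.2 - x s l‖ • (v s l - v s p.2)⟫) s :=
    ((hv p.1 s).sub (hv p.2 s)).norm_sq
  have hactive (p : Fin N × Fin N) (s : ℝ)
      (hp : ‖v s p.1 - v s p.2‖ ^ 2 = ⨆ q : Fin N × Fin N, ‖v s q.1 - v s q.2‖ ^ 2) :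
      ∀ k l, ‖v s k - v s l‖ ≤ ‖v s p.1 - v s p.2‖ := fun k l ↦
    (pow_le_pow_iff_left₀ (norm_nonneg _) (norm_nonneg _) two_ne_zero).1 <|
      hp ▸ le_ciSup (Finite.bddAbove_range fun q : Fin N × Fin N ↦ ‖v s q.1 - v s q.2‖ ^ 2) (k, l)
  have hdecay := ciSup_le_mul_exp_of_hasDerivAt (b := t) (K := -(2 * (lam * ψmin)))
    (fun p s _ ↦ hderiv p s)
    (fun p s _ hp ↦ by
      nlinarith [inner_sub_cuckerSmale_sub_le hlam hψ (x s) (v s) (hactive p s hp)]) t ⟨ht, le_rfl⟩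
  rw [sub_zero] at hdecay
  exact (le_ciSup (Finite.bddAbove_range fun q : Fin N × Fin N ↦ ‖v t q.1 - v t q.2‖ ^ 2)
    (i, j)).trans hdecay

end InnerProductSpace

theorem cucker_smale_unconditional_flocking_general (d N : ℕ)
    (lam ψmin : ℝ) (hlam : 0 < lam)
    (ψ : ℝ → ℝ)
    (hψlb : ∀ r : ℝ, 0 ≤ r → ψmin ≤ ψ r)
    (x v : ℝ → Fin N → EuclideanSpace ℝ (Fin d))
    (hv : ∀ i t, HasDerivAt (fun s => v s i)
      ((lam / N) • ∑ j : Fin N, ψ (‖x t i - x t j‖) • (v t j - v t i)) t) :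
    ∀ t : ℝ, 0 ≤ t → ∀ i j : Fin N,
      ‖v t i - v t j‖ ≤ (⨆ k : Fin N, ⨆ l : Fin N, ‖v 0 k - v 0 l‖)
        * Real.exp (-(lam * ψmin) * t) := by
  intro t ht i j
  have : Nonempty (Fin N) := ⟨i⟩
  set D₀ := ⨆ k : Fin N, ⨆ l : Fin N, ‖v 0 k - v 0 l‖
  have hD₀ (k l : Fin N) : ‖v 0 k - v 0 l‖ ≤ D₀ :=
    le_ciSup_of_le (Finite.bddAbove_range _) k
      (le_ciSup (Finite.bddAbove_range fun l ↦ ‖v 0 k - v 0 l‖) l)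
  have hsq₀ : ⨆ p : Fin N × Fin N, ‖v 0 p.1 - v 0 p.2‖ ^ 2 ≤ D₀ ^ 2 :=
    ciSup_le fun p ↦ pow_le_pow_left₀ (norm_nonneg _) (hD₀ p.1 p.2) 2
  have hD₀_nonneg : 0 ≤ D₀ := (norm_nonneg _).trans (hD₀ i i)
  refine (pow_le_pow_iff_left₀ (norm_nonneg _) (by positivity) two_ne_zero).1 ?_
  calc ‖v t i - v t j‖ ^ 2
      ≤ (⨆ p : Fin N × Fin N, ‖v 0 p.1 - v 0 p.2‖ ^ 2) * exp (-(2 * (lam * ψmin)) * t) :=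
        cuckerSmale_norm_sub_sq_le hlam.le hψlb hv ht i j
    _ ≤ D₀ ^ 2 * exp (-(2 * (lam * ψmin)) * t) := by gcongr
    _ = (D₀ * exp (-(lam * ψmin) * t)) ^ 2 := by rw [mul_pow, ← exp_nat_mul]; ring_nf

/-- Unconditional flocking for the Cucker–Smale system with communication
rate bounded below: the velocity diameter decays like `D(0) e^{−λψ_min t}`. -/
theorem cucker_smale_unconditional_flocking (d N : ℕ)
    (lam ψmin : ℝ) (hlam : 0 < lam) (hψmin : 0 < ψmin)
    (ψ : ℝ → ℝ) (hψcont : Continuous ψ)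
    (hψanti : ∀ r s : ℝ, 0 ≤ r → r ≤ s → ψ s ≤ ψ r)
    (hψlb : ∀ r : ℝ, 0 ≤ r → ψmin ≤ ψ r)
    (x v : ℝ → Fin N → EuclideanSpace ℝ (Fin d))
    (hx : ∀ i t, HasDerivAt (fun s => x s i) (v t i) t)
    (hv : ∀ i t, HasDerivAt (fun s => v s i)
      ((lam / N) • ∑ j : Fin N, ψ (‖x t i - x t j‖) • (v t j - v t i)) t) :
    ∀ t : ℝ, 0 ≤ t → ∀ i j : Fin N,
      ‖v t i - v t j‖ ≤ (⨆ k : Fin N, ⨆ l : Fin N, ‖v 0 k - v 0 l‖)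
        * Real.exp (-(lam * ψmin) * t) :=
  cucker_smale_unconditional_flocking_general d N lam ψmin hlam ψ hψlb x v hv
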